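/- arXiv:1912.01776 — 3 statements merged into one kernel-verified Lean document; each statement's English description precedes it below -/
import Mathlib

section
/- Let R₀ be an invertible k×k real matrix, s a 1×k real row vector, and t a real scalar with γ := t − s R₀⁻¹ sᵀ ≠ 0. Let C₀ be a k×r real matrix and u a 1×r real row vector, and form the (k+1)×(k+1) block matrix R₁ = [[R₀, sᵀ], [s, t]] and the (k+1)×r matrix C₁ obtained by appending the row u below C₀. Then C₁ᵀ R₁⁻¹ C₁ = C₀ᵀ R₀⁻¹ C₀ + (1/γ) (C₀ᵀ R₀⁻¹ sᵀ − uᵀ)(s R₀⁻¹ C₀ − u). -/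
/-!
Write `R₁⁻¹` in Schur-complement form and sandwich it between `C₁ᵀ` and `C₁`: this gives
`C₀ᵀ R₀⁻¹ C₀` plus a correction through the inverse of the Schur complement `t • 1 - s R₀⁻¹ sᵀ`,
which here is the `1 × 1` matrix `γ • 1`, with inverse `γ⁻¹ • 1`.
-/

open Matrix

namespace Matrix

variable {l m n o α : Type*} [Fintype m] [Fintype n] [DecidableEq m] [DecidableEq n]
  [CommRing α]

theorem inv_fromBlocks_of_isUnit_det₁₁ (A : Matrix m m α) (B : Matrix m n α)
    (C : Matrix n m α) (D : Matrix n n α) (hA : IsUnit A.det)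
    (hS : IsUnit (D - C * A⁻¹ * B).det) :
    (fromBlocks A B C D)⁻¹ =
      fromBlocks (A⁻¹ + A⁻¹ * B * (D - C * A⁻¹ * B)⁻¹ * C * A⁻¹)
        (-(A⁻¹ * B * (D - C * A⁻¹ * B)⁻¹)) (-((D - C * A⁻¹ * B)⁻¹ * C * A⁻¹))
        (D - C * A⁻¹ * B)⁻¹ := by
  let _ := invertibleOfIsUnitDet A hA
  let _ := invertibleOfIsUnitDet (D - C * ⅟A * B) (by rwa [invOf_eq_nonsing_inv])
  let _ := fromBlocks₁₁Invertible A B C D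
  simpa only [invOf_eq_nonsing_inv] using invOf_fromBlocks₁₁_eq A B C D

theorem fromCols_mul_inv_fromBlocks_mul_fromRows (A : Matrix m m α) (B : Matrix m n α)
    (C : Matrix n m α) (D : Matrix n n α) (hA : IsUnit A.det)
    (hS : IsUnit (D - C * A⁻¹ * B).det) (X : Matrix l m α) (Y : Matrix l n α)
    (P : Matrix m o α) (Q : Matrix n o α) :
    fromCols X Y * (fromBlocks A B C D)⁻¹ * fromRows P Q =
      X * A⁻¹ * P + (X * A⁻¹ * B - Y) * (D - C * A⁻¹ * B)⁻¹ * (C * A⁻¹ * P - Q) := by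
  rw [inv_fromBlocks_of_isUnit_det₁₁ A B C D hA hS, fromCols_mul_fromBlocks,
    fromCols_mul_fromRows]
  simp only [Matrix.add_mul, Matrix.mul_add, Matrix.mul_neg, Matrix.neg_mul, Matrix.sub_mul,
    Matrix.mul_sub, ← Matrix.mul_assoc]
  abel

end Matrix

/-- Rank-one update of the weighted Gram matrix: with `R₁ = [[R₀, sᵀ], [s, t]]`,
Schur complement `γ = t − s R₀⁻¹ sᵀ ≠ 0`, and `C₁` obtained from `C₀` by appending
the row `u`, one has
`C₁ᵀ R₁⁻¹ C₁ = C₀ᵀ R₀⁻¹ C₀ + γ⁻¹ (C₀ᵀ R₀⁻¹ sᵀ − uᵀ)(s R₀⁻¹ C₀ − u)`. -/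
theorem stmt_6 {k r : ℕ}
    (R₀ : Matrix (Fin k) (Fin k) ℝ) (hR₀ : IsUnit R₀.det)
    (s : Matrix (Fin 1) (Fin k) ℝ) (t : ℝ)
    (γ : ℝ) (hγ : γ = t - (s * R₀⁻¹ * sᵀ) 0 0) (hγ0 : γ ≠ 0)
    (C₀ : Matrix (Fin k) (Fin r) ℝ) (u : Matrix (Fin 1) (Fin r) ℝ)
    (R₁ : Matrix (Fin k ⊕ Fin 1) (Fin k ⊕ Fin 1) ℝ)
    (hR₁ : R₁ = fromBlocks R₀ sᵀ s (t • (1 : Matrix (Fin 1) (Fin 1) ℝ)))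
    (C₁ : Matrix (Fin k ⊕ Fin 1) (Fin r) ℝ) (hC₁ : C₁ = fromRows C₀ u) :
    C₁ᵀ * R₁⁻¹ * C₁
      = C₀ᵀ * R₀⁻¹ * C₀ + γ⁻¹ • ((C₀ᵀ * R₀⁻¹ * sᵀ - uᵀ) * (s * R₀⁻¹ * C₀ - u)) := by
  have hschur : t • 1 - s * R₀⁻¹ * sᵀ = γ • (1 : Matrix (Fin 1) (Fin 1) ℝ) := by
    ext i j
    fin_cases i; fin_cases j
    simp [hγ]
  have hschur_det : IsUnit (t • 1 - s * R₀⁻¹ * sᵀ).det := by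
    simp [hschur, hγ0]
  have hschur_inv : (γ • (1 : Matrix (Fin 1) (Fin 1) ℝ))⁻¹ = γ⁻¹ • 1 :=
    inv_eq_left_inv (by rw [smul_mul_smul, Matrix.one_mul, inv_mul_cancel₀ hγ0, one_smul])
  rw [hR₁, hC₁, transpose_fromRows,
    fromCols_mul_inv_fromBlocks_mul_fromRows _ _ _ _ hR₀ hschur_det, hschur, hschur_inv,
    Matrix.mul_smul, Matrix.mul_one, Matrix.smul_mul]
end

section
/- Let R₀ be a k×k real symmetric positive definite matrix, s a 1×k real row vector, and t a real scalar with γ := t − s R₀⁻¹ sᵀ > 0; let C₀ be a k×r real matrix, u a 1×r real row vector, and Q an r×r real symmetric positive definite matrix. Set W₀ := C₀ᵀ R₀⁻¹ C₀ + Q⁻¹, R₁ = [[R₀, sᵀ], [s, t]], and let C₁ be C₀ with the row u appended. Then det(C₁ᵀ R₁⁻¹ C₁ + Q⁻¹) ≥ det(W₀); that is, appending any candidate sensor never decreases the determinant of the regularized Fisher information matrix. -/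
/-!
Eliminating the first `k` coordinates with the Schur complement `γ` gives
`C₁ᵀ R₁⁻¹ C₁ = C₀ᵀ R₀⁻¹ C₀ + γ⁻¹ vᵀ v` with `v = u - s R₀⁻¹ C₀`, so the new information matrix
is a positive rank-one update of `W₀`. By the matrix determinant lemma its determinant is
`det W₀ · (1 + γ⁻¹ v W₀⁻¹ vᵀ) ≥ det W₀`, since `W₀` is positive definite.
-/

open Matrix

variable {m n p α : Type*} [Fintype m] [Fintype n] [DecidableEq m] [DecidableEq n]

theorem transpose_fromRows_mul_inv_fromBlocks_mul_fromRows [CommRing α] {A : Matrix m m α}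
    (hAT : Aᵀ = A) (hA : IsUnit A.det) (C : Matrix n m α) (D : Matrix n n α)
    (hS : IsUnit (D - C * A⁻¹ * Cᵀ).det) (X : Matrix m p α) (Y : Matrix n p α) :
    (fromRows X Y)ᵀ * (fromBlocks A Cᵀ C D)⁻¹ * fromRows X Y =
      Xᵀ * A⁻¹ * X + (Y - C * A⁻¹ * X)ᵀ * (D - C * A⁻¹ * Cᵀ)⁻¹ * (Y - C * A⁻¹ * X) := by
  let := A.invertibleOfIsUnitDet hA
  let := (D - C * ⅟A * Cᵀ).invertibleOfIsUnitDet (by rwa [invOf_eq_nonsing_inv])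
  let := fromBlocks₁₁Invertible A Cᵀ C D
  have hAinvT : (A⁻¹)ᵀ = A⁻¹ := by rw [transpose_nonsing_inv, hAT]
  rw [← invOf_eq_nonsing_inv (fromBlocks A Cᵀ C D), invOf_fromBlocks₁₁_eq]
  simp only [invOf_eq_nonsing_inv, transpose_fromRows, fromCols_mul_fromBlocks,
    fromCols_mul_fromRows, transpose_sub, transpose_mul, hAinvT]
  generalize (D - C * A⁻¹ * Cᵀ)⁻¹ = T
  simp only [Matrix.mul_add, Matrix.add_mul, Matrix.mul_sub, Matrix.sub_mul, Matrix.mul_neg,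
    Matrix.neg_mul, Matrix.mul_assoc]
  abel

theorem Matrix.PosDef.det_le_det_add_transpose_mul_mul {ι : Type*} [Unique ι] {W : Matrix n n ℝ}
    (hW : W.PosDef) {D : Matrix ι ι ℝ} (hD : D.PosSemidef) (v : Matrix ι n ℝ) :
    W.det ≤ (W + vᵀ * D * v).det := by
  have hquad : 0 ≤ (v * W⁻¹ * vᵀ) default default := by
    simpa [conjTranspose_eq_transpose_of_trivial] using
      (hW.inv.posSemidef.mul_mul_conjTranspose_same v).diag_nonneg (i := default)
  have hdet : (1 + D * v * W⁻¹ * vᵀ).det =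
      1 + D default default * (v * W⁻¹ * vᵀ) default default := by
    rw [det_unique, Matrix.add_apply, one_apply_eq, Matrix.mul_assoc D, Matrix.mul_assoc D,
      mul_apply, Fintype.sum_unique]
  rw [Matrix.mul_assoc, det_add_mul _ _ hW.det_pos.ne'.isUnit, hdet]
  exact le_mul_of_one_le_right hW.det_pos.le
    (le_add_of_nonneg_right (mul_nonneg hD.diag_nonneg hquad))

/-- Monotonicity of the greedy objective: with `R₀` symmetric positive definite,
Schur complement `γ = t − s R₀⁻¹ sᵀ > 0`, `Q` symmetric positive definite,
`W₀ = C₀ᵀ R₀⁻¹ C₀ + Q⁻¹`, `R₁ = [[R₀, sᵀ], [s, t]]`, and `C₁` obtained from `C₀` by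
appending the row `u`, appending any candidate sensor never decreases the determinant:
`det(C₁ᵀ R₁⁻¹ C₁ + Q⁻¹) ≥ det W₀`. -/
theorem stmt_8 {k r : ℕ}
    (R₀ : Matrix (Fin k) (Fin k) ℝ) (hR₀ : R₀.PosDef)
    (s : Matrix (Fin 1) (Fin k) ℝ) (t : ℝ)
    (γ : ℝ) (hγ : γ = t - (s * R₀⁻¹ * sᵀ) 0 0) (hγ0 : 0 < γ)
    (C₀ : Matrix (Fin k) (Fin r) ℝ) (u : Matrix (Fin 1) (Fin r) ℝ)
    (Q : Matrix (Fin r) (Fin r) ℝ) (hQ : Q.PosDef)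
    (W₀ : Matrix (Fin r) (Fin r) ℝ) (hW₀ : W₀ = C₀ᵀ * R₀⁻¹ * C₀ + Q⁻¹)
    (R₁ : Matrix (Fin k ⊕ Fin 1) (Fin k ⊕ Fin 1) ℝ)
    (hR₁ : R₁ = fromBlocks R₀ sᵀ s (t • (1 : Matrix (Fin 1) (Fin 1) ℝ)))
    (C₁ : Matrix (Fin k ⊕ Fin 1) (Fin r) ℝ) (hC₁ : C₁ = fromRows C₀ u) :
    (C₁ᵀ * R₁⁻¹ * C₁ + Q⁻¹).det ≥ W₀.det := by
  have hR₀T : R₀ᵀ = R₀ := by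
    simpa [conjTranspose_eq_transpose_of_trivial] using hR₀.isHermitian.eq
  have hschur : t • 1 - s * R₀⁻¹ * sᵀ = γ • (1 : Matrix (Fin 1) (Fin 1) ℝ) := by
    ext i j
    fin_cases i; fin_cases j
    simp [hγ]
  have hγ1 : (γ • (1 : Matrix (Fin 1) (Fin 1) ℝ)).PosDef := PosDef.one.smul hγ0
  have hW₀pd : W₀.PosDef := by
    rw [hW₀]
    refine PosDef.posSemidef_add ?_ hQ.inv
    simpa [conjTranspose_eq_transpose_of_trivial] using
      hR₀.inv.posSemidef.conjTranspose_mul_mul_same C₀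
  have hupdate : C₁ᵀ * R₁⁻¹ * C₁ + Q⁻¹ =
      W₀ + (u - s * R₀⁻¹ * C₀)ᵀ * (γ • 1 : Matrix (Fin 1) (Fin 1) ℝ)⁻¹ * (u - s * R₀⁻¹ * C₀) := by
    rw [hC₁, hR₁, transpose_fromRows_mul_inv_fromBlocks_mul_fromRows hR₀T
      hR₀.det_pos.ne'.isUnit, hschur, hW₀]
    · abel
    · rw [hschur]
      exact hγ1.det_pos.ne'.isUnit
  rw [hupdate]
  exact hW₀pd.det_le_det_add_transpose_mul_mul hγ1.inv.posSemidef _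
end

section
/- Let C be a k×r real matrix with C Cᵀ positive definite, let I be a finite nonempty index set, and for each i ∈ I let uᵢ be a 1×r real row vector; let Cᵢ' denote the (k+1)×r matrix obtained by appending the row uᵢ below C. Then for any i, j ∈ I, det(Cᵢ' Cᵢ'ᵀ) ≥ det(Cⱼ' Cⱼ'ᵀ) if and only if uᵢ (I_r − Cᵀ (C Cᵀ)⁻¹ C) uᵢᵀ ≥ uⱼ (I_r − Cᵀ (C Cᵀ)⁻¹ C) uⱼᵀ; consequently an index maximizes det(Cᵢ' Cᵢ'ᵀ) over I exactly when it maximizes the scalar uᵢ (I_r − Cᵀ (C Cᵀ)⁻¹ C) uᵢᵀ. -/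
open Matrix

/-! The Gram matrix of `C` with a row `u` appended is a 2×2 block matrix whose top-left block
`C Cᵀ` is invertible, so its determinant is `det(C Cᵀ)` times the Schur complement
`u uᵀ - u Cᵀ (C Cᵀ)⁻¹ C uᵀ = u (I - Cᵀ (C Cᵀ)⁻¹ C) uᵀ`. Since `det(C Cᵀ) > 0` does not depend on
the candidate row, comparing determinants is the same as comparing these scalars. -/

theorem Matrix.det_fromRows_mul_transpose {m n R : Type*} [Fintype m] [DecidableEq m]
    [Fintype n] [DecidableEq n] [CommRing R] (A : Matrix m n R) (v : Matrix (Fin 1) n R)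
    (hA : IsUnit (A * Aᵀ).det) :
    (fromRows A v * (fromRows A v)ᵀ).det
      = (A * Aᵀ).det * (v * (1 - Aᵀ * (A * Aᵀ)⁻¹ * A) * vᵀ : Matrix (Fin 1) (Fin 1) R) 0 0 := by
  have : Invertible (A * Aᵀ) := invertibleOfIsUnitDet _ hA
  have schur : v * vᵀ - v * Aᵀ * ⅟(A * Aᵀ) * (A * vᵀ) = v * (1 - Aᵀ * (A * Aᵀ)⁻¹ * A) * vᵀ := by
    simp only [invOf_eq_nonsing_inv, Matrix.mul_sub, Matrix.mul_one, Matrix.sub_mul,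
      Matrix.mul_assoc]
  rw [transpose_fromRows, fromRows_mul_fromCols, det_fromBlocks₁₁, schur, det_fin_one]

theorem stmt_15_general {k r : ℕ} {ι : Type*}
    (C : Matrix (Fin k) (Fin r) ℝ) (hC : (C * Cᵀ).PosDef)
    (u : ι → Matrix (Fin 1) (Fin r) ℝ)
    (C' : ι → Matrix (Fin k ⊕ Fin 1) (Fin r) ℝ)
    (hC' : ∀ i, C' i = fromRows C (u i))
    (φ : ι → ℝ)
    (hφ : ∀ i, φ i
      = (u i * ((1 : Matrix (Fin r) (Fin r) ℝ) - Cᵀ * (C * Cᵀ)⁻¹ * C) * (u i)ᵀ) 0 0) :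
    (∀ i j : ι, (C' j * (C' j)ᵀ).det ≤ (C' i * (C' i)ᵀ).det ↔ φ j ≤ φ i) ∧
      (∀ i : ι, (∀ j : ι, (C' j * (C' j)ᵀ).det ≤ (C' i * (C' i)ᵀ).det)
        ↔ (∀ j : ι, φ j ≤ φ i)) := by
  have det_eq (i : ι) : (C' i * (C' i)ᵀ).det = (C * Cᵀ).det * φ i := by
    rw [hC' i, hφ i, det_fromRows_mul_transpose C (u i) hC.det_pos.ne'.isUnit]
  have det_le_iff (i j : ι) : (C' j * (C' j)ᵀ).det ≤ (C' i * (C' i)ᵀ).det ↔ φ j ≤ φ i := by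
    rw [det_eq i, det_eq j]
    exact mul_le_mul_iff_right₀ hC.det_pos
  exact ⟨det_le_iff, fun i => forall_congr' (det_le_iff i)⟩

/-- Correctness of the greedy selection step in the underdetermined regime: if `C Cᵀ` is
positive definite and, for each candidate `i`, `Cᵢ'` is `C` with the row `uᵢ` appended,
then comparing `det(Cᵢ' Cᵢ'ᵀ)` between candidates is equivalent to comparing the scalar
`uᵢ (I − Cᵀ (C Cᵀ)⁻¹ C) uᵢᵀ`; consequently an index maximizes the determinant over the
candidate set exactly when it maximizes the scalar criterion. -/
theorem stmt_15 {k r : ℕ} {ι : Type*} [Fintype ι] [Nonempty ι]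
    (C : Matrix (Fin k) (Fin r) ℝ) (hC : (C * Cᵀ).PosDef)
    (u : ι → Matrix (Fin 1) (Fin r) ℝ)
    (C' : ι → Matrix (Fin k ⊕ Fin 1) (Fin r) ℝ)
    (hC' : ∀ i, C' i = fromRows C (u i))
    (φ : ι → ℝ)
    (hφ : ∀ i, φ i
      = (u i * ((1 : Matrix (Fin r) (Fin r) ℝ) - Cᵀ * (C * Cᵀ)⁻¹ * C) * (u i)ᵀ) 0 0) :
    (∀ i j : ι, (C' j * (C' j)ᵀ).det ≤ (C' i * (C' i)ᵀ).det ↔ φ j ≤ φ i) ∧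
      (∀ i : ι, (∀ j : ι, (C' j * (C' j)ᵀ).det ≤ (C' i * (C' i)ᵀ).det)
        ↔ (∀ j : ι, φ j ≤ φ i)) :=
  stmt_15_general C hC u C' hC' φ hφ
end
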